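/- Assume all rewards r(i,a,j) are nonnegative and let V_max = (max_π ‖r_π‖_∞)/(1−γ). Let (π_k) be a sequence of policies generated by Howard's PI from any initial policy π_0. Then for every ε > 0 and every index k with k ≥ (1/(1−γ)) log(V_max/ε) at which π_k is defined, the policy π_k is ε-optimal: ‖v_* − v_{π_k}‖_∞ ≤ ε. -/

import Mathlib

/-!
Every `T_π` is monotone and `T_π v - T_π w = γ P_π (v - w)` with `P_π` stochastic, so by a
minimum principle sub- and supersolutions of `v = T_π v` bound `v_π`. With nonnegative rewards
this gives `0 ≤ v_π ≤ V_max`, hence `‖v_* - v_{π_0}‖ ≤ V_max`. A greedy step contracts the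
distance to `v_*` by `γ`, so `‖v_* - v_{π_k}‖ ≤ γ^k V_max ≤ e^{-(1-γ) k} V_max ≤ ε`.
-/

open Matrix BigOperators

/-- A finite discounted MDP with `n ≥ 1` states and `m ≥ 2` actions:
transition probabilities `p i a j`, rewards `r i a j`, discount factor `γ ∈ (0,1)`. -/
structure MDP (n m : ℕ) : Type where
  n_pos : 1 ≤ n
  m_ge_two : 2 ≤ m
  p : Fin n → Fin m → Fin n → ℝ
  r : Fin n → Fin m → Fin n → ℝ
  γ : ℝ
  p_nonneg : ∀ i a j, 0 ≤ p i a j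
  p_sum : ∀ i a, ∑ j, p i a j = 1
  γ_pos : 0 < γ
  γ_lt_one : γ < 1

/-- A (stationary deterministic) policy. -/
abbrev MDP.Policy (n m : ℕ) : Type := Fin n → Fin m

namespace MDP

variable {n m : ℕ}

/-- The row-stochastic transition matrix `P_π` of a policy. -/
def P (M : MDP n m) (π : Policy n m) : Matrix (Fin n) (Fin n) ℝ :=
  Matrix.of fun i j => M.p i (π i) j

/-- The expected reward vector `r_π` of a policy. -/
def rPol (M : MDP n m) (π : Policy n m) : Fin n → ℝ :=
  fun i => ∑ j, M.p i (π i) j * M.r i (π i) j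

/-- The Bellman operator `T_π v = r_π + γ P_π v` of a policy. -/
def Tpol (M : MDP n m) (π : Policy n m) (v : Fin n → ℝ) : Fin n → ℝ :=
  fun i => M.rPol π i + M.γ * (M.P π *ᵥ v) i

/-- `IsValue M V` asserts that, for every policy `π`, `V π` is the value function `v_π`,
i.e. the (unique) solution of the Bellman equation `v_π = T_π v_π`. -/
def IsValue (M : MDP n m) (V : Policy n m → Fin n → ℝ) : Prop :=
  ∀ π, V π = M.Tpol π (V π)

/-- The optimal Bellman operator `T v = max_π T_π v` (componentwise maximum). -/
noncomputable def T (M : MDP n m) (v : Fin n → ℝ) : Fin n → ℝ :=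
  fun i => ⨆ π : Policy n m, M.Tpol π v i

/-- The optimal value function `v_*`, the componentwise maximum of `v_π` over policies. -/
noncomputable def vStar (M : MDP n m) (V : Policy n m → Fin n → ℝ) : Fin n → ℝ :=
  fun i => ⨆ π : Policy n m, V π i

/-- A policy is optimal when its value equals `v_*`. -/
def IsOptimal (M : MDP n m) (V : Policy n m → Fin n → ℝ) (π : Policy n m) : Prop :=
  V π = M.vStar V

/-- `π'` is greedy with respect to `v_π`: `T_{π'} v_π = T v_π`.  One step of Howard's PI
from a non-optimal `π` moves to such a `π'`. -/
def Greedy (M : MDP n m) (V : Policy n m → Fin n → ℝ) (π π' : Policy n m) : Prop :=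
  M.Tpol π' (V π) = M.T (V π)

/-- One step of Simplex-PI: `π'` agrees with `π` except at a single state `s` maximizing
the advantage `a_π(i) = (T v_π - v_π)(i)`, where `π'(s)` achieves `T v_π(s)`. -/
def SimplexStep (M : MDP n m) (V : Policy n m → Fin n → ℝ) (π π' : Policy n m) : Prop :=
  ∃ s : Fin n, (∀ i, i ≠ s → π' i = π i) ∧
    (∀ i, M.T (V π) i - V π i ≤ M.T (V π) s - V π s) ∧
    M.Tpol π' (V π) s = M.T (V π) s

/-- The vector `x_π = (I - γ P_πᵀ)⁻¹ 1`. -/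
noncomputable def xPol (M : MDP n m) (π : Policy n m) : Fin n → ℝ :=
  ((1 : Matrix (Fin n) (Fin n) ℝ) - M.γ • (M.P π)ᵀ)⁻¹ *ᵥ (fun _ => (1 : ℝ))

/-- `R` is a recurrent class of `π`: nonempty, closed under positive-probability
transitions of `P_π`, and every state of `R` is reachable from every other state of `R`
along positive-probability transitions.  (For a deterministic MDP this is the notion of
a cycle of `π`.) -/
def IsRecClass (M : MDP n m) (π : Policy n m) (R : Set (Fin n)) : Prop :=
  R.Nonempty ∧ (∀ i ∈ R, ∀ j, 0 < M.P π i j → j ∈ R) ∧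
    ∀ i ∈ R, ∀ j ∈ R, Relation.ReflTransGen (fun a b => 0 < M.P π a b) i j

/-- A state is recurrent for `π` if it belongs to some recurrent class of `π`. -/
def Recurrent (M : MDP n m) (π : Policy n m) (i : Fin n) : Prop :=
  ∃ R : Set (Fin n), M.IsRecClass π R ∧ i ∈ R

/-- A state is transient for `π` if it is not recurrent for `π`. -/
def Transient (M : MDP n m) (π : Policy n m) (i : Fin n) : Prop :=
  ¬ M.Recurrent π i

/-- Assumption 1: `τ_t, τ_r ≥ 1` with `x_π(i) ≤ τ_t` for transient states and
`x_π(i) ≥ n / ((1-γ) τ_r)` for recurrent states, for every policy `π`. -/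
def Ass1 (M : MDP n m) (τt τr : ℝ) : Prop :=
  1 ≤ τt ∧ 1 ≤ τr ∧
    (∀ π i, M.Transient π i → M.xPol π i ≤ τt) ∧
    (∀ π i, M.Recurrent π i → (n : ℝ) / ((1 - M.γ) * τr) ≤ M.xPol π i)

/-- Assumption 2: the state space is partitioned into a set of states transient for every
policy and a set of states recurrent for every policy. -/
def Ass2 (M : MDP n m) : Prop :=
  ∃ 𝒯 ℛ : Set (Fin n), 𝒯 ∪ ℛ = Set.univ ∧ 𝒯 ∩ ℛ = ∅ ∧
    ∀ π : Policy n m, (∀ i ∈ 𝒯, M.Transient π i) ∧ (∀ i ∈ ℛ, M.Recurrent π i)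

/-- The MDP is deterministic when every transition probability is 0 or 1. -/
def Deterministic (M : MDP n m) : Prop :=
  ∀ i a j, M.p i a j = 0 ∨ M.p i a j = 1

/-- `V_max = (max_π ‖r_π‖_∞) / (1 - γ)`. -/
noncomputable def Vmax (M : MDP n m) : ℝ :=
  (⨆ π : Policy n m, ‖M.rPol π‖) / (1 - M.γ)

end MDP

namespace Matrix

variable {ι : Type*} [Fintype ι] [DecidableEq ι] {P : Matrix ι ι ℝ}

lemma mulVec_le_of_mem_rowStochastic (hP : P ∈ rowStochastic ℝ ι) {v : ι → ℝ} {c : ℝ}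
    (hv : ∀ j, v j ≤ c) (i : ι) : (P *ᵥ v) i ≤ c := calc
  ∑ j, P i j * v j ≤ ∑ j, P i j * c :=
      Finset.sum_le_sum fun j _ => mul_le_mul_of_nonneg_left (hv j) (nonneg_of_mem_rowStochastic hP)
  _ = c := by rw [← Finset.sum_mul, sum_row_of_mem_rowStochastic hP i, one_mul]

lemma le_mulVec_of_mem_rowStochastic (hP : P ∈ rowStochastic ℝ ι) {v : ι → ℝ} {c : ℝ}
    (hv : ∀ j, c ≤ v j) (i : ι) : c ≤ (P *ᵥ v) i := by
  have h := mulVec_le_of_mem_rowStochastic hP (v := -v) (c := -c) (fun j => neg_le_neg (hv j)) i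
  rw [mulVec_neg, Pi.neg_apply] at h
  linarith

/-- Minimum principle: at a minimal coordinate of `w`, `w ≥ γ P w ≥ γ w`, so `(1 - γ) w ≥ 0`. -/
lemma nonneg_of_smul_mulVec_le (hP : P ∈ rowStochastic ℝ ι) {γ : ℝ} (hγ₀ : 0 ≤ γ)
    (hγ₁ : γ < 1) {w : ι → ℝ} (hw : γ • (P *ᵥ w) ≤ w) : 0 ≤ w := by
  intro i
  have : Nonempty ι := ⟨i⟩
  obtain ⟨i₀, hmin⟩ := Finite.exists_min w
  have hPw : w i₀ ≤ (P *ᵥ w) i₀ := le_mulVec_of_mem_rowStochastic hP hmin i₀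
  have hγPw : γ * (P *ᵥ w) i₀ ≤ w i₀ := hw i₀
  have hw₀ : 0 ≤ w i₀ := by nlinarith
  exact hw₀.trans (hmin i)

end Matrix

namespace MDP

variable {n m : ℕ}

lemma nonempty_policy (M : MDP n m) : Nonempty (Policy n m) :=
  ⟨fun _ => ⟨0, by linarith [M.m_ge_two]⟩⟩

variable (M : MDP n m)

lemma P_mem_rowStochastic (π : Policy n m) : M.P π ∈ Matrix.rowStochastic ℝ (Fin n) :=
  Matrix.mem_rowStochastic_iff_sum.2 ⟨fun _ _ => M.p_nonneg _ _ _, fun i => M.p_sum i (π i)⟩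

lemma Tpol_sub (π : Policy n m) (v w : Fin n → ℝ) :
    M.Tpol π v - M.Tpol π w = M.γ • (M.P π *ᵥ (v - w)) := by
  ext i
  simp only [Tpol, Pi.sub_apply, Pi.smul_apply, Matrix.mulVec_sub, smul_eq_mul]
  ring

lemma Tpol_mono (π : Policy n m) : Monotone (M.Tpol π) := by
  intro v w hvw
  rw [← sub_nonneg, Tpol_sub]
  exact smul_nonneg M.γ_pos.le
    (Matrix.nonneg_mulVec_of_mem_rowStochastic (M.P_mem_rowStochastic π) (sub_nonneg.2 hvw))

lemma Tpol_le_T (π : Policy n m) (v : Fin n → ℝ) : M.Tpol π v ≤ M.T v :=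
  fun i => le_ciSup (Finite.bddAbove_range fun σ => M.Tpol σ v i) π

lemma le_vStar (V : Policy n m → Fin n → ℝ) (π : Policy n m) : V π ≤ M.vStar V :=
  fun i => le_ciSup (Finite.bddAbove_range fun σ => V σ i) π

lemma norm_rPol_le_iSup (π : Policy n m) : ‖M.rPol π‖ ≤ ⨆ σ, ‖M.rPol σ‖ :=
  le_ciSup (Finite.bddAbove_range fun σ => ‖M.rPol σ‖) π

lemma rPol_nonneg (hr : ∀ i a j, 0 ≤ M.r i a j) (π : Policy n m) : 0 ≤ M.rPol π :=
  fun _ => Finset.sum_nonneg fun _ _ => mul_nonneg (M.p_nonneg _ _ _) (hr _ _ _)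

lemma norm_vStar_sub_le (V : Policy n m → Fin n → ℝ) (π : Policy n m) {c : ℝ}
    (h : ∀ i, M.vStar V i - V π i ≤ c) : ‖M.vStar V - V π‖ ≤ c := by
  have : Nonempty (Fin n) := Fin.pos_iff_nonempty.mp M.n_pos
  refine (pi_norm_le_iff_of_nonempty _).2 fun i => ?_
  rw [Real.norm_eq_abs, Pi.sub_apply, abs_of_nonneg (sub_nonneg.2 (M.le_vStar V π i))]
  exact h i

variable {M} {V : Policy n m → Fin n → ℝ}

namespace IsValue

lemma le_of_le_Tpol (hV : M.IsValue V) {π : Policy n m} {v : Fin n → ℝ}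
    (hv : v ≤ M.Tpol π v) : v ≤ V π := by
  rw [← sub_nonneg]
  refine Matrix.nonneg_of_smul_mulVec_le (M.P_mem_rowStochastic π) M.γ_pos.le M.γ_lt_one ?_
  rw [← M.Tpol_sub]
  nth_rw 2 [hV π]
  exact sub_le_sub_left hv _

lemma le_of_Tpol_le (hV : M.IsValue V) {π : Policy n m} {v : Fin n → ℝ}
    (hv : M.Tpol π v ≤ v) : V π ≤ v := by
  rw [← sub_nonneg]
  refine Matrix.nonneg_of_smul_mulVec_le (M.P_mem_rowStochastic π) M.γ_pos.le M.γ_lt_one ?_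
  rw [← M.Tpol_sub]
  nth_rw 2 [hV π]
  exact sub_le_sub_right hv _

lemma nonneg (hV : M.IsValue V) (hr : ∀ i a j, 0 ≤ M.r i a j) (π : Policy n m) : 0 ≤ V π :=
  hV.le_of_le_Tpol fun i => by
    simpa [Tpol, Matrix.mulVec_zero] using M.rPol_nonneg hr π i

lemma le_of_greedy (hV : M.IsValue V) {π π' : Policy n m} (hg : M.Greedy V π π') :
    V π ≤ V π' :=
  hV.le_of_le_Tpol <| by
    rw [hg]
    exact (hV π).le.trans (M.Tpol_le_T π (V π))

lemma vStar_le_Vmax (hV : M.IsValue V) (i : Fin n) : M.vStar V i ≤ M.Vmax := by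
  have := M.nonempty_policy
  have hγ : 0 < 1 - M.γ := sub_pos.2 M.γ_lt_one
  refine ciSup_le fun σ => hV.le_of_Tpol_le (v := fun _ => M.Vmax) (fun j => ?_) i
  have hr : M.rPol σ j ≤ (1 - M.γ) * M.Vmax := by
    rw [Vmax, mul_div_cancel₀ _ hγ.ne']
    exact ((Real.le_norm_self _).trans (norm_le_pi_norm _ j)).trans (M.norm_rPol_le_iSup σ)
  have hP := Matrix.mulVec_le_of_mem_rowStochastic (M.P_mem_rowStochastic σ)
    (v := fun _ => M.Vmax) (fun _ => le_rfl) j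
  have := mul_le_mul_of_nonneg_left hP M.γ_pos.le
  simp only [Tpol]
  linarith

lemma norm_vStar_sub_le_Vmax (hV : M.IsValue V) (hr : ∀ i a j, 0 ≤ M.r i a j) (π : Policy n m) :
    ‖M.vStar V - V π‖ ≤ M.Vmax :=
  M.norm_vStar_sub_le V π fun i => (sub_le_self _ (hV.nonneg hr π i)).trans (hV.vStar_le_Vmax i)

/-- Each value `v_σ = T_σ v_π + γ P_σ (v_σ - v_π)` is at most `T v_π + γ ‖v_* - v_π‖`, and
`T v_π = T_{π'} v_π ≤ T_{π'} v_{π'} = v_{π'}` by policy improvement. -/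
lemma norm_vStar_sub_le_of_greedy (hV : M.IsValue V) {π π' : Policy n m}
    (hg : M.Greedy V π π') : ‖M.vStar V - V π'‖ ≤ M.γ * ‖M.vStar V - V π‖ := by
  have := M.nonempty_policy
  refine M.norm_vStar_sub_le V π' fun i => ?_
  suffices M.vStar V i ≤ V π' i + M.γ * ‖M.vStar V - V π‖ by linarith
  refine ciSup_le fun σ => ?_
  have hgreedy : M.Tpol σ (V π) i ≤ V π' i := calc
    M.Tpol σ (V π) i ≤ M.T (V π) i := M.Tpol_le_T σ (V π) i
    _ = M.Tpol π' (V π) i := (congrFun hg i).symm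
    _ ≤ M.Tpol π' (V π') i := M.Tpol_mono π' (hV.le_of_greedy hg) i
    _ = V π' i := (congrFun (hV π') i).symm
  have hP : (M.P σ *ᵥ (V σ - V π)) i ≤ ‖M.vStar V - V π‖ :=
    Matrix.mulVec_le_of_mem_rowStochastic (M.P_mem_rowStochastic σ) (fun j =>
      (sub_le_sub_right (M.le_vStar V σ j) _).trans
        ((Real.le_norm_self _).trans (norm_le_pi_norm (M.vStar V - V π) j))) i
  have hσ := congrFun (M.Tpol_sub σ (V σ) (V π)) i
  rw [← hV σ] at hσ
  simp only [Pi.sub_apply, Pi.smul_apply, smul_eq_mul] at hσ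
  linarith [mul_le_mul_of_nonneg_left hP M.γ_pos.le]

end IsValue

end MDP

lemma pow_mul_le_of_log_div_le {γ A ε : ℝ} {k : ℕ} (hγ₀ : 0 ≤ γ) (hγ₁ : γ < 1) (hε : 0 < ε)
    (hk : 1 / (1 - γ) * Real.log (A / ε) ≤ k) : γ ^ k * A ≤ ε := by
  rcases le_or_gt A 0 with hA | hA
  · nlinarith [pow_nonneg hγ₀ k]
  have hγ : 0 < 1 - γ := sub_pos.2 hγ₁
  have hlog : Real.log (A / ε) ≤ k * (1 - γ) := by
    rwa [one_div_mul_eq_div, div_le_iff₀ hγ] at hk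
  have hA_le : A ≤ ε * Real.exp (k * (1 - γ)) := by
    rwa [Real.log_le_iff_le_exp (div_pos hA hε), div_le_iff₀' hε] at hlog
  have hγ_le : γ ^ k ≤ Real.exp (-(k * (1 - γ))) := by
    rw [← mul_neg, Real.exp_nat_mul]
    exact pow_le_pow_left₀ hγ₀ (by linarith [Real.add_one_le_exp (-(1 - γ))]) k
  calc γ ^ k * A ≤ Real.exp (-(k * (1 - γ))) * (ε * Real.exp (k * (1 - γ))) :=
        mul_le_mul hγ_le hA_le hA.le (Real.exp_pos _).le
    _ = ε := by rw [Real.exp_neg]; field_simp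

/-- with nonnegative rewards, Howard's PI produces an `ε`-optimal policy
after at most `(1/(1-γ)) log(V_max/ε)` iterations. -/
theorem howard_eps_optimal {n m : ℕ} (M : MDP n m)
    (hr : ∀ i a j, 0 ≤ M.r i a j)
    (V : MDP.Policy n m → Fin n → ℝ) (hV : M.IsValue V)
    (π : ℕ → MDP.Policy n m) (K : ℕ)
    (hrun : ∀ k < K, ¬ M.IsOptimal V (π k) ∧ M.Greedy V (π k) (π (k + 1)))
    (ε : ℝ) (hε : 0 < ε) (k : ℕ) (hkK : k ≤ K)
    (hk : (1 / (1 - M.γ)) * Real.log (M.Vmax / ε) ≤ (k : ℝ)) :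
    ‖M.vStar V - V (π k)‖ ≤ ε := by
  have hdist : ∀ j ≤ K, ‖M.vStar V - V (π j)‖ ≤ M.γ ^ j * M.Vmax := by
    intro j
    induction j with
    | zero => simpa using hV.norm_vStar_sub_le_Vmax hr (π 0)
    | succ j ih =>
      intro hj
      calc ‖M.vStar V - V (π (j + 1))‖ ≤ M.γ * ‖M.vStar V - V (π j)‖ :=
            hV.norm_vStar_sub_le_of_greedy (hrun j hj).2
        _ ≤ M.γ * (M.γ ^ j * M.Vmax) :=
            mul_le_mul_of_nonneg_left (ih (Nat.le_of_succ_le hj)) M.γ_pos.le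
        _ = M.γ ^ (j + 1) * M.Vmax := by ring
  exact (hdist k hkK).trans (pow_mul_le_of_log_div_le M.γ_pos.le M.γ_lt_one hε hk)
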